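/- The fill closure of an n-point pattern has at most n(n+1)/2 points: for any finite P ⊂ ℤ² with |P| = n, |φ(P)| ≤ n(n+1)/2. -/

import Mathlib

open Set Relation

/-- Points of the plane lattice. -/
abbrev Pt : Type := ℤ × ℤ

/-- The triangle shape `T = {(0,1),(1,1),(1,0)}`. -/
def Tshape : Set Pt := {(0, 1), (1, 1), (1, 0)}

/-- Translate of a set of points by a vector. -/
def transl (v : Pt) (S : Set Pt) : Set Pt := (fun p => v + p) '' S

/-- Translate of a finite set of points by a vector. -/
def transF (v : Pt) (S : Finset Pt) : Finset Pt := S.image (fun p => v + p)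

/-- A set is filled if every translate of `T` containing at least two of its
points is contained in it. -/
def Filled (F : Set Pt) : Prop :=
  ∀ v : Pt, 2 ≤ (F ∩ transl v Tshape).ncard → transl v Tshape ⊆ F

/-- The fill closure `φ(P)`: smallest filled superset of `P`. -/
def fill (P : Set Pt) : Set Pt := ⋂₀ {F | P ⊆ F ∧ Filled F}

/-- A single triangle solitaire move: if a translate `v + T` contains exactly two
points of `P`, replace one of them by the third point of `v + T`. -/
def Move (P Q : Finset Pt) : Prop :=
  ∃ v x y : Pt, x ∈ Tshape ∧ y ∈ Tshape ∧ x ≠ y ∧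
    v + x ∈ P ∧ v + y ∉ P ∧
    ((P : Set Pt) ∩ transl v Tshape).ncard = 2 ∧
    (Q : Set Pt) = insert (v + y) ((P : Set Pt) \ {v + x})

/-- `Q` is in the solitaire orbit of `P`. -/
def InOrbit (P Q : Finset Pt) : Prop := Relation.ReflTransGen Move P Q

/-- The discrete triangle `T_n = {(a,b) ∈ {0,…,n−1}² : a + b ≥ n − 1}`. -/
def triangle (n : ℕ) : Set Pt :=
  {p | 0 ≤ p.1 ∧ p.1 < (n : ℤ) ∧ 0 ≤ p.2 ∧ p.2 < (n : ℤ) ∧ (n : ℤ) - 1 ≤ p.1 + p.2}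

/-- Neighbourhood of a point: the other points sharing a translate of `T` with it. -/
def nbr (x : Pt) : Set Pt :=
  {y | y ≠ x ∧ ∃ v : Pt, x ∈ transl v Tshape ∧ y ∈ transl v Tshape}

/-- Neighbourhood of a set. -/
def nbrSet (A : Set Pt) : Set Pt := ⋃ a ∈ A, nbr a

/-- Two sets touch if one meets the neighbourhood of the other. -/
def Touch (A B : Set Pt) : Prop := (A ∩ nbrSet B).Nonempty ∨ (B ∩ nbrSet A).Nonempty

/-- `(r, k, v)` is a decomposition of `φ(P)` into pairwise non-touching
translated triangles `vᵢ + T_{kᵢ}`. -/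
def IsDecomp (P : Finset Pt) (r : ℕ) (k : Fin r → ℕ) (v : Fin r → Pt) : Prop :=
  (fill (P : Set Pt) = ⋃ i, transl (v i) (triangle (k i))) ∧
  (∀ i, 1 ≤ k i) ∧
  (∀ i j, i ≠ j → ¬ Touch (transl (v i) (triangle (k i))) (transl (v j) (triangle (k j))))

/-- The horizontal line `L_n = {(a, n−1) : 0 ≤ a ≤ n−1}` (top edge of `T_n`). -/
def lineF (n : ℕ) : Finset Pt :=
  (Finset.range n).image (fun a : ℕ => (((a : ℤ), (n : ℤ) - 1) : Pt))

/-- The vertical edge `{(n−1, b) : 0 ≤ b ≤ n−1}` of `T_n`. -/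
def vlineF (n : ℕ) : Finset Pt :=
  (Finset.range n).image (fun b : ℕ => ((((n : ℤ) - 1), (b : ℤ)) : Pt))

/-- The diagonal edge `{(a, n−1−a) : 0 ≤ a ≤ n−1}` of `T_n`. -/
def dlineF (n : ℕ) : Finset Pt :=
  (Finset.range n).image (fun a : ℕ => (((a : ℤ), (n : ℤ) - 1 - (a : ℤ)) : Pt))

/-- The points of `T_n` below the top line, listed row `n−2` down to row `0`,
each row from right to left. -/
def belowPts (n : ℕ) : List Pt :=
  (List.range (n - 1)).flatMap (fun i =>
    (List.range (n - 1 - i)).map (fun t =>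
      (((n : ℤ) - 1 - (t : ℤ), (n : ℤ) - 2 - (i : ℤ)) : Pt)))

/-- The canonical pattern `P_{n,k}`: the line `L_n` together with the first `k`
points of `T_n \ L_n` in the order: row `n−2` right to left, then row `n−3`, etc. -/
def PnkF (n k : ℕ) : Finset Pt := lineF n ∪ ((belowPts n).take k).toFinset

/-- A TEP family on the triangle shape, with cells ordered `(0,1), (1,1), (1,0)`:
any two of the three symbols determine the third uniquely. -/
def IsTEP {A : Type} (R : Set (A × A × A)) : Prop :=
  (∀ a b : A, ∃! c : A, (a, b, c) ∈ R) ∧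
  (∀ a c : A, ∃! b : A, (a, b, c) ∈ R) ∧
  (∀ b c : A, ∃! a : A, (a, b, c) ∈ R)

/-- A colouring is valid on `T_n` if every translate of `T` inside `T_n`
carries a pattern of `R`. -/
def ValidOn {A : Type} (R : Set (A × A × A)) (n : ℕ) (x : Pt → A) : Prop :=
  ∀ v : Pt, transl v Tshape ⊆ triangle n →
    (x (v + (0, 1)), x (v + (1, 1)), x (v + (1, 0))) ∈ R

/-- One completion step: a translate of `T` inside `T_n` has exactly two
coloured cells; colour the third using the TEP rule `R`. States are pairs
(set of coloured cells, colouring). -/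
def TStep {A : Type} (R : Set (A × A × A)) (n : ℕ)
    (s t : Set Pt × (Pt → A)) : Prop :=
  ∃ v : Pt, transl v Tshape ⊆ triangle n ∧
    ∃ c ∈ transl v Tshape, c ∉ s.1 ∧ transl v Tshape \ {c} ⊆ s.1 ∧
      t.1 = insert c s.1 ∧ (∀ p : Pt, p ≠ c → t.2 p = s.2 p) ∧
      (t.2 (v + (0, 1)), t.2 (v + (1, 1)), t.2 (v + (1, 0))) ∈ R

/-- `P ⊆ T_n` is a basis: for every colouring of `P`, every maximal run of the
iterative completion process covers `T_n` and produces a valid pattern. -/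
def IsBasis {A : Type} (R : Set (A × A × A)) (n : ℕ) (P : Finset Pt) : Prop :=
  (P : Set Pt) ⊆ triangle n ∧
  ∀ q : Pt → A, ∀ s : Set Pt × (Pt → A),
    Relation.ReflTransGen (TStep R n) ((P : Set Pt), q) s →
    (∀ t, ¬ TStep R n s t) →
    triangle n ⊆ s.1 ∧ ValidOn R n s.2

/-!
Every point of `P` is a translate of `T_1`. Two translated triangles of sides `a` and `b` that touch
lie in a single translate of `T_{a+b}`, so merging touching triangles repeatedly covers `P` by
pairwise non-touching triangles of total side at most `n`. Their union is filled: a translate of `T`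
meeting two different triangles would make them touch, and a single triangle is filled. Hence
`φ(P)` lies in this union, of size at most `Σ kᵢ(kᵢ+1)/2 ≤ n(n+1)/2`.
-/

lemma mem_transl {v p : Pt} {S : Set Pt} : p ∈ transl v S ↔ p - v ∈ S := by
  constructor
  · rintro ⟨q, hq, rfl⟩
    simpa using hq
  · intro h
    exact ⟨p - v, h, add_sub_cancel v p⟩

lemma mem_transl_triangle {v p : Pt} {k : ℕ} :
    p ∈ transl v (triangle k) ↔
      v.1 ≤ p.1 ∧ p.1 < v.1 + k ∧ v.2 ≤ p.2 ∧ p.2 < v.2 + k ∧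
        v.1 + v.2 + k - 1 ≤ p.1 + p.2 := by
  rw [mem_transl]
  simp only [triangle, Set.mem_ofPred_eq, Prod.fst_sub, Prod.snd_sub]
  omega

lemma transl_Tshape (w : Pt) :
    transl w Tshape = {w + (0, 1), w + (1, 1), w + (1, 0)} := by
  simp [transl, Tshape, Set.image_insert_eq]

lemma finite_transl_Tshape (w : Pt) : (transl w Tshape).Finite := by
  rw [transl_Tshape]
  exact ((Set.finite_singleton _).insert _).insert _

lemma ncard_transl (v : Pt) (S : Set Pt) : (transl v S).ncard = S.ncard :=
  Set.ncard_image_of_injective S (add_right_injective v)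

lemma finite_triangle (k : ℕ) : (triangle k).Finite := by
  refine (Set.finite_Icc ((0 : ℤ), (0 : ℤ)) ((k : ℤ) - 1, (k : ℤ) - 1)).subset ?_
  rintro ⟨x, y⟩ ⟨h1, h2, h3, h4, -⟩
  simp only [Set.mem_Icc, Prod.mk_le_mk]
  omega

def triNum (k : ℕ) : ℕ := k * (k + 1) / 2

lemma two_mul_triNum (k : ℕ) : 2 * triNum k = k * (k + 1) :=
  Nat.mul_div_cancel' (Nat.even_mul_succ_self k).two_dvd

lemma triNum_succ (k : ℕ) : triNum (k + 1) = triNum k + (k + 1) := by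
  have h := two_mul_triNum k
  have h' := two_mul_triNum (k + 1)
  have : (k + 1) * (k + 1 + 1) = k * (k + 1) + 2 * (k + 1) := by ring
  omega

lemma triNum_add_le (a b : ℕ) : triNum a + triNum b ≤ triNum (a + b) := by
  have ha := two_mul_triNum a
  have hb := two_mul_triNum b
  have hab := two_mul_triNum (a + b)
  nlinarith [Nat.zero_le (a * b)]

lemma triNum_mono : Monotone triNum :=
  fun _ _ h => Nat.div_le_div_right (Nat.mul_le_mul h (Nat.succ_le_succ h))

/-- `T_{k+1}` is `(1,1) + T_k` together with its lower-left diagonal of `k + 1` points. -/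
lemma ncard_triangle_le (k : ℕ) : (triangle k).ncard ≤ triNum k := by
  induction k with
  | zero =>
    have : triangle 0 = ∅ := by
      ext p
      simp only [triangle, Set.mem_ofPred_eq, Set.mem_empty_iff_false, iff_false]
      omega
    simp [this]
  | succ k ih =>
    set D : Set Pt := (fun y : ℤ => ((k : ℤ) - y, y)) '' Set.Icc 0 k
    have hsub : triangle (k + 1) ⊆ transl (1, 1) (triangle k) ∪ D := by
      rintro ⟨x, y⟩ ⟨h1, h2, h3, h4, h5⟩
      push_cast at h2 h4 h5
      by_cases hxy : x + y = k
      · exact Or.inr ⟨y, by simp only [Set.mem_Icc]; omega, by ext <;> simp; omega⟩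
      · left
        rw [mem_transl_triangle]
        omega
    have hD : D.ncard ≤ k + 1 := by
      calc D.ncard ≤ (Set.Icc (0 : ℤ) k).ncard := Set.ncard_image_le (Set.finite_Icc _ _)
        _ = k + 1 := by
          rw [← Finset.coe_Icc, Set.ncard_coe_finset, Int.card_Icc]
          omega
    calc (triangle (k + 1)).ncard
        ≤ (transl (1, 1) (triangle k) ∪ D).ncard :=
          Set.ncard_le_ncard hsub
            (((finite_triangle k).image _).union ((Set.finite_Icc _ _).image _))
      _ ≤ (transl (1, 1) (triangle k)).ncard + D.ncard := Set.ncard_union_le _ _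
      _ ≤ triNum (k + 1) := by rw [ncard_transl, triNum_succ]; omega

lemma fill_subset_of_filled {P F : Set Pt} (hPF : P ⊆ F) (hF : Filled F) : fill P ⊆ F :=
  Set.sInter_subset_of_mem ⟨hPF, hF⟩

lemma mem_nbr_comm {x y : Pt} : y ∈ nbr x ↔ x ∈ nbr y := by
  simp only [nbr, Set.mem_ofPred_eq]
  exact ⟨fun ⟨hne, v, hx, hy⟩ => ⟨hne.symm, v, hy, hx⟩,
    fun ⟨hne, v, hy, hx⟩ => ⟨hne.symm, v, hx, hy⟩⟩

lemma touch_iff {A B : Set Pt} : Touch A B ↔ ∃ a ∈ A, ∃ b ∈ B, b ∈ nbr a := by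
  simp only [Touch, nbrSet, Set.Nonempty, Set.mem_inter_iff, Set.mem_iUnion, exists_prop]
  constructor
  · rintro (⟨a, ha, b, hb, hab⟩ | ⟨b, hb, a, ha, hba⟩)
    · exact ⟨a, ha, b, hb, mem_nbr_comm.1 hab⟩
    · exact ⟨a, ha, b, hb, hba⟩
  · rintro ⟨a, ha, b, hb, hab⟩
    exact Or.inr ⟨b, hb, a, ha, hab⟩

lemma abs_sub_le_one_of_mem_nbr {x y : Pt} (h : y ∈ nbr x) :
    |x.1 - y.1| ≤ 1 ∧ |x.2 - y.2| ≤ 1 ∧ |x.1 + x.2 - (y.1 + y.2)| ≤ 1 := by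
  obtain ⟨-, u, hx, hy⟩ := h
  rw [transl_Tshape] at hx hy
  simp only [Set.mem_insert_iff, Set.mem_singleton_iff] at hx hy
  rcases hx with rfl | rfl | rfl <;> rcases hy with rfl | rfl | rfl <;> simp [abs_le] <;> omega

def tri (c : Pt × ℕ) : Set Pt := transl c.1 (triangle c.2)

lemma finite_tri (c : Pt × ℕ) : (tri c).Finite := (finite_triangle c.2).image _

lemma ncard_tri_le (c : Pt × ℕ) : (tri c).ncard ≤ triNum c.2 :=
  (ncard_transl _ _).trans_le (ncard_triangle_le c.2)

lemma mem_tri_one (p : Pt) : p ∈ tri (p, 1) := by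
  rw [tri, mem_transl_triangle]
  push_cast
  omega

lemma filled_tri (c : Pt × ℕ) : Filled (tri c) := by
  intro w hw
  obtain ⟨x, ⟨hxc, hxw⟩, y, ⟨hyc, hyw⟩, hxy⟩ :=
    (Set.one_lt_ncard ((finite_transl_Tshape w).subset Set.inter_subset_right)).1 hw
  rw [transl_Tshape] at hxw hyw ⊢
  simp only [Set.mem_insert_iff, Set.mem_singleton_iff] at hxw hyw
  rw [tri, mem_transl_triangle] at hxc hyc
  simp only [Set.insert_subset_iff, Set.singleton_subset_iff, tri, mem_transl_triangle]
  rcases hxw with rfl | rfl | rfl <;> rcases hyw with rfl | rfl | rfl <;>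
    first
      | exact absurd rfl hxy
      | (simp only [Prod.fst_add, Prod.snd_add] at hxc hyc ⊢; omega)

/-- Touching triangles are at hexagonal distance one, so the triangle of side `a + b` whose top
and right edges are the outermost ones of the two contains both. -/
lemma exists_tri_superset_of_touch {c d : Pt × ℕ} (h : Touch (tri c) (tri d)) :
    ∃ v : Pt, tri c ∪ tri d ⊆ tri (v, c.2 + d.2) := by
  obtain ⟨a, ha, b, hb, hab⟩ := touch_iff.1 h
  obtain ⟨h1, h2, h3⟩ := abs_sub_le_one_of_mem_nbr hab
  rw [abs_le] at h1 h2 h3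
  refine ⟨(max (c.1.1 + c.2) (d.1.1 + d.2) - (c.2 + d.2),
    max (c.1.2 + c.2) (d.1.2 + d.2) - (c.2 + d.2)), ?_⟩
  rw [tri, mem_transl_triangle] at ha hb
  rintro p (hp | hp) <;> rw [tri, mem_transl_triangle] at hp ⊢ <;>
    · push_cast at *
      omega

def triUnion (L : List (Pt × ℕ)) : Set Pt := ⋃ c ∈ L, tri c

def sideSum (L : List (Pt × ℕ)) : ℕ := (L.map Prod.snd).sum

def NonTouching (c d : Pt × ℕ) : Prop := ¬ Touch (tri c) (tri d)

lemma triUnion_cons (c : Pt × ℕ) (L : List (Pt × ℕ)) :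
    triUnion (c :: L) = tri c ∪ triUnion L := by
  simp [triUnion]

lemma List.Perm.triUnion_eq {L L' : List (Pt × ℕ)} (h : L.Perm L') :
    triUnion L = triUnion L' := by
  simp only [triUnion, h.mem_iff]

lemma finite_triUnion (L : List (Pt × ℕ)) : (triUnion L).Finite :=
  Set.Finite.biUnion L.finite_toSet fun c _ => finite_tri c

lemma ncard_triUnion_le (L : List (Pt × ℕ)) : (triUnion L).ncard ≤ triNum (sideSum L) := by
  induction L with
  | nil => simp [triUnion]
  | cons c L ih =>
    calc (triUnion (c :: L)).ncard ≤ (tri c).ncard + (triUnion L).ncard := by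
          rw [triUnion_cons]; exact Set.ncard_union_le _ _
      _ ≤ triNum c.2 + triNum (sideSum L) := Nat.add_le_add (ncard_tri_le c) ih
      _ ≤ triNum (sideSum (c :: L)) := by
          simpa [sideSum] using triNum_add_le c.2 (sideSum L)

lemma filled_triUnion {L : List (Pt × ℕ)} (hL : L.Pairwise NonTouching) :
    Filled (triUnion L) := by
  intro w hw
  obtain ⟨x, ⟨hx, hxw⟩, y, ⟨hy, hyw⟩, hxy⟩ :=
    (Set.one_lt_ncard ((finite_transl_Tshape w).subset Set.inter_subset_right)).1 hw
  simp only [triUnion, Set.mem_iUnion, exists_prop] at hx hy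
  obtain ⟨c, hcL, hxc⟩ := hx
  obtain ⟨d, hdL, hyd⟩ := hy
  obtain rfl | hcd := eq_or_ne c d
  · have h2 : 2 ≤ (tri c ∩ transl w Tshape).ncard :=
      (Set.one_lt_ncard ((finite_transl_Tshape w).subset Set.inter_subset_right)).2
        ⟨x, ⟨hxc, hxw⟩, y, ⟨hyd, hyw⟩, hxy⟩
    exact (filled_tri c w h2).trans (Set.subset_biUnion_of_mem hcL)
  · have : Std.Symm NonTouching := ⟨fun _ _ h ht => h ht.symm⟩
    exact absurd (touch_iff.2 ⟨x, hxc, y, hyd, hxy.symm, w, hxw, hyw⟩) (hL.forall hcL hdL hcd)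

lemma exists_shorter_cover_of_not_pairwise {L : List (Pt × ℕ)} (hL : ¬ L.Pairwise NonTouching) :
    ∃ L' : List (Pt × ℕ), L'.length < L.length ∧ triUnion L ⊆ triUnion L' ∧
      sideSum L' ≤ sideSum L := by
  obtain ⟨c, d, hcd, htouch⟩ : ∃ c d, List.Sublist [c, d] L ∧ Touch (tri c) (tri d) := by
    simpa [List.pairwise_iff_forall_sublist, NonTouching] using hL
  obtain ⟨r, hperm⟩ := hcd.exists_perm_append
  obtain ⟨v, hv⟩ := exists_tri_superset_of_touch htouch
  have hperm : L.Perm (c :: d :: r) := hperm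
  refine ⟨(v, c.2 + d.2) :: r, ?_, ?_, ?_⟩
  · simp [hperm.length_eq]
  · rw [hperm.triUnion_eq, triUnion_cons, triUnion_cons, triUnion_cons, ← Set.union_assoc]
    exact Set.union_subset_union_left _ hv
  · simp [sideSum, (hperm.map Prod.snd).sum_eq, Nat.add_assoc]

lemma exists_pairwise_nonTouching_cover (L : List (Pt × ℕ)) :
    ∃ L' : List (Pt × ℕ), L'.Pairwise NonTouching ∧ triUnion L ⊆ triUnion L' ∧
      sideSum L' ≤ sideSum L := by
  induction hn : L.length using Nat.strong_induction_on generalizing L with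
  | _ n ih =>
    by_cases hL : L.Pairwise NonTouching
    · exact ⟨L, hL, subset_rfl, le_rfl⟩
    obtain ⟨M, hlen, hLM, hsum⟩ := exists_shorter_cover_of_not_pairwise hL
    obtain ⟨L', hL', hML', hsum'⟩ := ih _ (hn ▸ hlen) M rfl
    exact ⟨L', hL', hLM.trans hML', hsum'.trans hsum⟩

lemma exists_unit_cover (P : Finset Pt) :
    ∃ L : List (Pt × ℕ), (P : Set Pt) ⊆ triUnion L ∧ sideSum L = P.card := by
  refine ⟨P.toList.map fun p => (p, 1), fun p hp => ?_, ?_⟩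
  · simp only [triUnion, Set.mem_iUnion, exists_prop, List.mem_map, Finset.mem_toList]
    exact ⟨(p, 1), ⟨p, hp, rfl⟩, mem_tri_one p⟩
  · simp [sideSum, Function.comp_def]

/-- the fill closure of an `n`-point pattern is finite with at
most `n(n+1)/2` points. -/
theorem fill_card_bound (P : Finset Pt) :
    (fill (P : Set Pt)).Finite ∧
      (fill (P : Set Pt)).ncard ≤ P.card * (P.card + 1) / 2 := by
  obtain ⟨L, hPL, hsum⟩ := exists_unit_cover P
  obtain ⟨L', hL', hLL', hsum'⟩ := exists_pairwise_nonTouching_cover L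
  have hfill : fill (P : Set Pt) ⊆ triUnion L' :=
    fill_subset_of_filled (hPL.trans hLL') (filled_triUnion hL')
  refine ⟨(finite_triUnion L').subset hfill, ?_⟩
  calc (fill (P : Set Pt)).ncard ≤ (triUnion L').ncard :=
        Set.ncard_le_ncard hfill (finite_triUnion L')
    _ ≤ triNum (sideSum L') := ncard_triUnion_le L'
    _ ≤ triNum P.card := triNum_mono (hsum'.trans hsum.le)
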